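/- Let L be a completely hereditarily atomic OML, let C(L) be its center, and let A be the set of atoms of C(L). Then C(L) is an atomic complete Boolean algebra, the map φ : L → Π_{a∈A} [⊥, a] given by φ(x)(a) = x ⊓ a is an order isomorphism, and for each a ∈ A the interval [⊥, a] with orthocomplementation z ↦ zᶜ ⊓ a is a directly irreducible OML (its center is {⊥, a}). -/

import Mathlib

/-- A complete orthomodular lattice. -/
class CompleteOML (α : Type*) extends CompleteLattice α, Compl α where
  compl_compl : ∀ x : α, xᶜᶜ = x
  compl_antitone : ∀ x y : α, x ≤ y → yᶜ ≤ xᶜ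
  inf_compl : ∀ x : α, x ⊓ xᶜ = ⊥
  sup_compl : ∀ x : α, x ⊔ xᶜ = ⊤
  orthomodular : ∀ x y : α, x ≤ y → x ⊔ (xᶜ ⊓ y) = y

/-- `x` and `y` commute: `x = (x ⊓ y) ⊔ (x ⊓ yᶜ)`. -/
def Commutes {α : Type*} [Lattice α] [Compl α] (x y : α) : Prop :=
  x = (x ⊓ y) ⊔ (x ⊓ yᶜ)

/-- The center of an OML: the set of elements commuting with every element. -/
def CenterSet (α : Type*) [Lattice α] [Compl α] : Set α := {c | ∀ y : α, Commutes c y}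

/-- A complete subalgebra of a complete OML. -/
def CompleteSubalgebra {α : Type*} [CompleteLattice α] [Compl α] (S : Set α) : Prop :=
  (∀ x ∈ S, xᶜ ∈ S) ∧ (∀ T : Set α, T ⊆ S → sSup T ∈ S) ∧ (∀ T : Set α, T ⊆ S → sInf T ∈ S)

/-- A subset `S` (as a poset with least element `⊥`) is atomic. -/
def AtomicSubset {α : Type*} [CompleteLattice α] (S : Set α) : Prop :=
  ∀ x ∈ S, x ≠ ⊥ → ∃ a ∈ S, a ≠ ⊥ ∧ (∀ s ∈ S, ¬ (⊥ < s ∧ s < a)) ∧ a ≤ x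

/-- An atom of the center of `α`. -/
def IsCentralAtom {α : Type*} [CompleteOML α] (a : α) : Prop :=
  a ∈ CenterSet α ∧ a ≠ ⊥ ∧ ∀ s ∈ CenterSet α, ¬ (⊥ < s ∧ s < a)

/-!
Orthomodularity makes commutation symmetric, so the center is closed under complements and
arbitrary joins: it is a complete subalgebra, hence atomic. An element commuting with every `g i`
distributes over `⨆ i, g i`; applied to the central atoms, which are pairwise disjoint and
join to `⊤` (a nonzero complement of their join would lie above a further atom), this gives
`x = ⨆ a, x ⊓ a`, i.e. the decomposition. Finally, for `z ≤ a` commuting inside `[⊥, a]`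
with every `w ≤ a`, taking `w = y ⊓ a` and using `(y ⊓ a)ᶜ ⊓ a = yᶜ ⊓ a` shows that `z`
commutes with every `y`, so `z` is central and thus `⊥` or `a`.
-/

namespace CompleteOML

variable {L : Type*} [CompleteOML L] {x y u c : L}

attribute [simp] CompleteOML.compl_compl

protected theorem compl_le_compl (h : x ≤ y) : yᶜ ≤ xᶜ := compl_antitone x y h

protected theorem le_compl_comm : x ≤ yᶜ ↔ y ≤ xᶜ :=
  ⟨fun h => by simpa using CompleteOML.compl_le_compl h,
    fun h => by simpa using CompleteOML.compl_le_compl h⟩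

protected theorem compl_le_comm : xᶜ ≤ y ↔ yᶜ ≤ x := by
  simpa using CompleteOML.le_compl_comm (x := xᶜ) (y := yᶜ)

protected theorem compl_bot : (⊥ : L)ᶜ = ⊤ := by simpa using sup_compl (⊥ : L)

protected theorem compl_sup (x y : L) : (x ⊔ y)ᶜ = xᶜ ⊓ yᶜ :=
  le_antisymm
    (le_inf (CompleteOML.compl_le_compl le_sup_left) (CompleteOML.compl_le_compl le_sup_right))
    (CompleteOML.le_compl_comm.mp <| sup_le (CompleteOML.le_compl_comm.mp inf_le_left)
      (CompleteOML.le_compl_comm.mp inf_le_right))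

protected theorem compl_inf (x y : L) : (x ⊓ y)ᶜ = xᶜ ⊔ yᶜ := by
  simpa using (congrArg (·ᶜ) (CompleteOML.compl_sup xᶜ yᶜ)).symm

theorem sInf_eq_compl_sSup_compl (T : Set L) : sInf T = (sSup ((·ᶜ) '' T))ᶜ :=
  le_antisymm
    (CompleteOML.le_compl_comm.mp <| sSup_le <| by
      rintro _ ⟨t, ht, rfl⟩
      exact CompleteOML.compl_le_compl (sInf_le ht))
    (le_sInf fun _ ht => CompleteOML.compl_le_comm.mp (le_sSup ⟨_, ht, rfl⟩))

/-- The orthomodular law, complemented. -/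
theorem sup_compl_inf_of_le (h : u ≤ c) : (u ⊔ cᶜ) ⊓ c = u := by
  simpa [CompleteOML.compl_sup, CompleteOML.compl_inf, inf_comm, sup_comm] using
    congrArg (·ᶜ) (orthomodular _ _ (CompleteOML.compl_le_compl h))

end CompleteOML

section CenterDecomposition

variable {L : Type*} [CompleteOML L]

theorem Commutes.symm {x y : L} (h : Commutes x y) : Commutes y x := by
  have hy : (x ⊓ y) ⊔ ((x ⊓ y)ᶜ ⊓ y) = y := CompleteOML.orthomodular _ _ inf_le_right
  have hle : (x ⊓ y)ᶜ ⊓ y ≤ xᶜ := by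
    refine CompleteOML.le_compl_comm.mp ?_
    rw [CompleteOML.compl_inf, CompleteOML.compl_compl]
    calc x = (x ⊓ y) ⊔ (x ⊓ yᶜ) := h
      _ ≤ (x ⊓ y) ⊔ yᶜ := sup_le_sup_left inf_le_right _
  refine le_antisymm ?_ (sup_le inf_le_left inf_le_left)
  calc y = (x ⊓ y) ⊔ ((x ⊓ y)ᶜ ⊓ y) := hy.symm
    _ ≤ (y ⊓ x) ⊔ (y ⊓ xᶜ) := sup_le_sup (inf_comm x y).le (le_inf inf_le_right hle)

theorem Commutes.compl_right {x y : L} (h : Commutes x y) : Commutes x yᶜ := by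
  rw [Commutes, CompleteOML.compl_compl, sup_comm]
  exact h

theorem inf_iSup_of_commutes {ι : Sort*} {c : L} {g : ι → L} (h : ∀ i, Commutes (g i) c) :
    c ⊓ ⨆ i, g i = ⨆ i, c ⊓ g i := by
  set u := ⨆ i, c ⊓ g i
  refine le_antisymm ?_ (iSup_le fun i => inf_le_inf_left _ (le_iSup g i))
  have huc : u ≤ c := iSup_le fun _ => inf_le_left
  have hg : ⨆ i, g i ≤ u ⊔ cᶜ := iSup_le fun i =>
    calc g i = (g i ⊓ c) ⊔ (g i ⊓ cᶜ) := h i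
      _ ≤ u ⊔ cᶜ := sup_le_sup (inf_comm (g i) c ▸ le_iSup (fun j => c ⊓ g j) i) inf_le_right
  calc c ⊓ ⨆ i, g i ≤ (u ⊔ cᶜ) ⊓ c := inf_comm c _ ▸ inf_le_inf_left c hg
    _ = u := CompleteOML.sup_compl_inf_of_le huc

theorem compl_mem_centerSet {c : L} (hc : c ∈ CenterSet L) : cᶜ ∈ CenterSet L :=
  fun y => ((hc y).symm.compl_right).symm

theorem sSup_mem_centerSet {T : Set L} (hT : T ⊆ CenterSet L) : sSup T ∈ CenterSet L := by
  intro y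
  refine le_antisymm (sSup_le fun t ht => ?_) (sup_le inf_le_left inf_le_left)
  calc t = (t ⊓ y) ⊔ (t ⊓ yᶜ) := hT ht y
    _ ≤ (sSup T ⊓ y) ⊔ (sSup T ⊓ yᶜ) :=
      sup_le_sup (inf_le_inf_right _ (le_sSup ht)) (inf_le_inf_right _ (le_sSup ht))

theorem sInf_mem_centerSet {T : Set L} (hT : T ⊆ CenterSet L) : sInf T ∈ CenterSet L := by
  rw [CompleteOML.sInf_eq_compl_sSup_compl]
  refine compl_mem_centerSet (sSup_mem_centerSet ?_)
  rintro _ ⟨t, ht, rfl⟩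
  exact compl_mem_centerSet (hT ht)

theorem completeSubalgebra_centerSet : CompleteSubalgebra (CenterSet L) :=
  ⟨fun _ => compl_mem_centerSet, fun _ => sSup_mem_centerSet, fun _ => sInf_mem_centerSet⟩

theorem inf_sup_of_mem_centerSet {c : L} (hc : c ∈ CenterSet L) (x y : L) :
    c ⊓ (x ⊔ y) = (c ⊓ x) ⊔ (c ⊓ y) := by
  simpa [iSup_bool_eq] using
    inf_iSup_of_commutes (g := fun b : Bool => bif b then x else y) fun _ => (hc _).symm

theorem IsCentralAtom.eq_bot_or_eq_of_le {a z : L} (ha : IsCentralAtom a)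
    (hz : z ∈ CenterSet L) (hza : z ≤ a) : z = ⊥ ∨ z = a := by
  by_contra! h
  exact ha.2.2 z hz ⟨bot_lt_iff_ne_bot.mpr h.1, lt_of_le_of_ne hza h.2⟩

theorem IsCentralAtom.inf_eq_bot {a b : L} (ha : IsCentralAtom a) (hb : IsCentralAtom b)
    (hab : a ≠ b) : a ⊓ b = ⊥ := by
  have hmem : a ⊓ b ∈ CenterSet L := by
    simpa using sInf_mem_centerSet (T := {a, b}) (by rintro _ (rfl | rfl); exacts [ha.1, hb.1])
  refine (ha.eq_bot_or_eq_of_le hmem inf_le_left).resolve_right fun h => ?_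
  rcases hb.eq_bot_or_eq_of_le ha.1 (inf_eq_left.mp h) with h' | h'
  exacts [ha.2.1 h', hab h']

theorem iSup_centralAtoms_eq_top (hat : AtomicSubset (CenterSet L)) :
    ⨆ a : {a : L // IsCentralAtom a}, (a : L) = ⊤ := by
  have hs : ⨆ a : {a : L // IsCentralAtom a}, (a : L) ∈ CenterSet L := by
    rw [← sSup_range]
    exact sSup_mem_centerSet (by rintro _ ⟨a, rfl⟩; exact a.2.1)
  set s := ⨆ a : {a : L // IsCentralAtom a}, (a : L)
  by_contra hs_top
  have hne : sᶜ ≠ ⊥ := fun h =>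
    hs_top (by rw [← CompleteOML.compl_compl s, h, CompleteOML.compl_bot])
  obtain ⟨a, ham, hane, hmin, has⟩ := hat sᶜ (compl_mem_centerSet hs) hne
  have has' : a ≤ s :=
    le_iSup (fun b : {a : L // IsCentralAtom a} => (b : L)) ⟨a, ham, hane, hmin⟩
  exact hane (le_bot_iff.mp (CompleteOML.inf_compl s ▸ le_inf has' has))

theorem iSup_inf_centralAtoms (hat : AtomicSubset (CenterSet L)) (x : L) :
    ⨆ a : {a : L // IsCentralAtom a}, x ⊓ (a : L) = x := by
  rw [← inf_iSup_of_commutes fun a => a.2.1 x, iSup_centralAtoms_eq_top hat, inf_top_eq]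

theorem iSup_inf_centralAtom_eq_apply (f : ∀ a : {a : L // IsCentralAtom a}, Set.Iic (a : L))
    (a : {a : L // IsCentralAtom a}) : (⨆ b, (f b : L)) ⊓ (a : L) = f a := by
  rw [inf_comm, inf_iSup_of_commutes fun b => (a.2.1 _).symm]
  refine le_antisymm (iSup_le fun b => ?_) (le_iSup_of_le a (le_inf (f a).2 le_rfl))
  by_cases hb : b = a
  · subst hb; exact inf_le_right
  · calc (a : L) ⊓ (f b : L) ≤ (a : L) ⊓ (b : L) := inf_le_inf_left _ (f b).2
      _ = ⊥ := a.2.inf_eq_bot b.2 fun h => hb (Subtype.ext h.symm)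
      _ ≤ (f a : L) := bot_le

def centralDecomposition (hat : AtomicSubset (CenterSet L)) :
    L ≃o ∀ a : {a : L // IsCentralAtom a}, Set.Iic (a : L) where
  toFun x a := ⟨x ⊓ (a : L), inf_le_right⟩
  invFun f := ⨆ a, (f a : L)
  left_inv := iSup_inf_centralAtoms hat
  right_inv f := funext fun a => Subtype.ext (iSup_inf_centralAtom_eq_apply f a)
  map_rel_iff' {x y} := by
    refine ⟨fun h => ?_, fun h a => inf_le_inf_right _ h⟩
    rw [← iSup_inf_centralAtoms hat x, ← iSup_inf_centralAtoms hat y]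
    exact iSup_mono fun a => Subtype.coe_le_coe.mpr (h a)

theorem compl_inf_inf_of_mem_centerSet {c : L} (hc : c ∈ CenterSet L) (y : L) :
    (y ⊓ c)ᶜ ⊓ c = yᶜ ⊓ c := by
  rw [CompleteOML.compl_inf, inf_comm (yᶜ ⊔ cᶜ), inf_sup_of_mem_centerSet hc,
    CompleteOML.inf_compl, sup_bot_eq, inf_comm]

theorem mem_centerSet_of_le_of_commutes_Iic {c z : L} (hc : c ∈ CenterSet L) (hzc : z ≤ c)
    (hz : ∀ w, w ≤ c → z = (z ⊓ w) ⊔ (z ⊓ (wᶜ ⊓ c))) : z ∈ CenterSet L := by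
  intro y
  have hzc' : ∀ w : L, z ⊓ (w ⊓ c) = z ⊓ w := fun w => by
    rw [← inf_assoc, inf_eq_left.mpr (inf_le_left.trans hzc)]
  simpa only [Commutes, hzc', compl_inf_inf_of_mem_centerSet hc] using
    hz (y ⊓ c) inf_le_right

theorem IsCentralAtom.center_Iic_eq_pair {a : L} (ha : IsCentralAtom a) :
    {z : L | z ≤ a ∧ ∀ w : L, w ≤ a → z = (z ⊓ w) ⊔ (z ⊓ (wᶜ ⊓ a))} = {⊥, a} := by
  ext z
  refine ⟨fun ⟨hza, hz⟩ => ha.eq_bot_or_eq_of_le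
    (mem_centerSet_of_le_of_commutes_Iic ha.1 hza hz) hza, ?_⟩
  rintro (rfl | rfl)
  · exact ⟨bot_le, fun _ _ => by simp⟩
  · refine ⟨le_rfl, fun w hw => ?_⟩
    rw [inf_eq_right.mpr hw, inf_eq_right.mpr inf_le_right]
    exact (CompleteOML.orthomodular _ _ hw).symm

end CenterDecomposition

/-- if `L` is a completely hereditarily atomic complete OML, then its
center is an atomic complete Boolean algebra (a complete subalgebra, distributive, and
atomic), the map `φ(x)(a) = x ⊓ a` is an order isomorphism of `L` onto the product of
the intervals `[⊥, a]` over the atoms `a` of the center, and each interval `[⊥, a]`,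
with the orthocomplementation `z ↦ zᶜ ⊓ a`, is directly irreducible: its center is
`{⊥, a}`. -/
theorem cha_decomposition {L : Type*} [CompleteOML L]
    (hcha : ∀ S : Set L, CompleteSubalgebra S → AtomicSubset S) :
    CompleteSubalgebra (CenterSet L) ∧
    (∀ x ∈ CenterSet L, ∀ y ∈ CenterSet L, ∀ z ∈ CenterSet L,
      x ⊓ (y ⊔ z) = (x ⊓ y) ⊔ (x ⊓ z)) ∧
    AtomicSubset (CenterSet L) ∧
    (∃ φ : L ≃o (∀ a : {a : L // IsCentralAtom a}, Set.Iic (a : L)),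
      ∀ (x : L) (a : {a : L // IsCentralAtom a}), ((φ x a : L)) = x ⊓ (a : L)) ∧
    (∀ a : L, IsCentralAtom a →
      {z : L | z ≤ a ∧ ∀ w : L, w ≤ a → z = (z ⊓ w) ⊔ (z ⊓ (wᶜ ⊓ a))} = {⊥, a}) := by
  have hat : AtomicSubset (CenterSet L) := hcha _ completeSubalgebra_centerSet
  exact ⟨completeSubalgebra_centerSet, fun x hx y _ z _ => inf_sup_of_mem_centerSet hx y z,
    hat, ⟨centralDecomposition hat, fun _ _ => rfl⟩, fun _ ha => ha.center_Iic_eq_pair⟩
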